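/- Let H ⊂ ℝ^N be an open half-space and let v be continuous on the closure of H, harmonic in H, constant on ∂H, and globally α-Hölder continuous on H for some α ∈ (0,1). Then v is constant on H. -/

import Mathlib

open MeasureTheory Metric Filter
open scoped ENNReal NNReal RealInnerProductSpace Topology

noncomputable section

abbrev Euc (N : ℕ) := EuclideanSpace ℝ (Fin N)

/-- Laplacian of `f` at `x`. -/
noncomputable def lap {N : ℕ} (f : Euc N → ℝ) (x : Euc N) : ℝ :=
  ∑ i : Fin N, fderiv ℝ (fun y => fderiv ℝ f y (EuclideanSpace.single i 1)) x
    (EuclideanSpace.single i 1)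

noncomputable def gam (N : ℕ) (t : ℝ) : ℝ :=
  Real.sqrt ((((N : ℝ) - 2) / 2) ^ 2 + t) - ((N : ℝ) - 2) / 2

/-- surface measure on the unit sphere of `ℝ^N`. -/
noncomputable def sphMeas (N : ℕ) : Measure (Euc N) :=
  (μH[((N : ℝ) - 1)]).restrict (Metric.sphere (0 : Euc N) 1)

noncomputable def lamMin (N : ℕ) (u : Euc N → ℝ) : ℝ :=
  sInf { c : ℝ | ∃ φ : Euc N → ℝ, ContDiff ℝ 1 φ ∧
    sphMeas N ({x | φ x ≠ 0} ∩ {x | u x = 0}) = 0 ∧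
    0 < ∫ x, (φ x) ^ 2 ∂(sphMeas N) ∧
    c = (∫ x, ‖gradient φ x‖ ^ 2 ∂(sphMeas N)) / (∫ x, (φ x) ^ 2 ∂(sphMeas N)) }

noncomputable def alphaKN (N k : ℕ) : ℝ :=
  sInf { s : ℝ | ∃ u : Fin k → Euc N → ℝ,
    (∀ j, MemLp (u j) 2 (sphMeas N)) ∧
    (∀ j, MemLp (fun x => ‖gradient (u j) x‖) 2 (sphMeas N)) ∧
    (∀ j, ¬ (u j =ᵐ[sphMeas N] 0)) ∧
    (∫ x, ∏ j, (u j x) ^ 2 ∂(sphMeas N)) = 0 ∧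
    s = ∑ j, gam N (lamMin N (u j)) }

end

/-!
Let `d` be the boundary value; it suffices to show `v ≤ d`, since `-v` satisfies the same
hypotheses. Write `t = ⟪x, e⟫ - c`. Hölder continuity up to the boundary gives `v ≤ d + C t^α`, so
for every `ε > 0` there is a height `T` with `v ≤ d + ε T` on `{t = T}`, and `v` is bounded above
on the slab `0 < t < T`. On this slab cut off by a large ball around `x₀`, `v` is dominated on the
boundary by the harmonic function `d + ε t + η (‖x - x₀‖² + N (T² - t²))`, hence inside by the
maximum principle. Evaluating at `x₀` and letting `η → 0`, then `ε → 0`, gives `v x₀ ≤ d`.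
-/

open InnerProductSpace Laplacian

theorem nonpos_of_forall_pos_le_mul {a K : ℝ} (h : ∀ σ > 0, a ≤ σ * K) : a ≤ 0 := by
  have hlim : Tendsto (fun σ : ℝ => σ * K) (𝓝[>] 0) (𝓝 0) := by
    simpa using ((continuous_mul_const K).tendsto 0).mono_left nhdsWithin_le_nhds
  exact ge_of_tendsto hlim (eventually_nhdsWithin_of_forall h)

theorem exists_gt_mul_rpow_le_mul {α : ℝ} (hα : α < 1) (C : ℝ) {ε : ℝ} (hε : 0 < ε) (a : ℝ) :
    ∃ T > a, C * T ^ α ≤ ε * T := by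
  have hlim : Tendsto (fun T : ℝ => C * T ^ (α - 1)) atTop (𝓝 0) := by
    simpa [neg_sub] using (tendsto_rpow_neg_atTop (by linarith : 0 < 1 - α)).const_mul C
  obtain ⟨T, hTε, hTa⟩ := ((hlim.eventually (gt_mem_nhds hε)).and
    (eventually_gt_atTop (max a 0))).exists
  have hT : 0 < T := (le_max_right a 0).trans_lt hTa
  refine ⟨T, (le_max_left a 0).trans_lt hTa, ?_⟩
  calc C * T ^ α = C * T ^ (α - 1) * T := by
        rw [Real.rpow_sub_one hT.ne', mul_assoc, div_mul_cancel₀ _ hT.ne']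
    _ ≤ ε * T := by gcongr

theorem IsLocalMax.deriv_deriv_nonpos {φ : ℝ → ℝ} {s : ℝ} (h : IsLocalMax φ s)
    (hc : ContinuousAt φ s) : deriv (deriv φ) s ≤ 0 := by
  by_contra! hpos
  have hmin := isLocalMin_of_deriv_deriv_pos hpos h.deriv_eq_zero hc
  have hconst : φ =ᶠ[𝓝 s] fun _ => φ s := by
    filter_upwards [h, hmin] with t h₁ h₂ using le_antisymm h₁ h₂
  have hderiv : deriv φ =ᶠ[𝓝 s] fun _ => 0 := by
    filter_upwards [Filter.Eventually.eventually_nhds hconst] with t ht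
    rw [EventuallyEq.deriv_eq ht, deriv_const]
  rw [hderiv.deriv_eq, deriv_const] at hpos
  exact lt_irrefl 0 hpos

theorem IsLocalMax.fderiv_fderiv_self_nonpos {E : Type*} [NormedAddCommGroup E] [NormedSpace ℝ E]
    {f : E → ℝ} {x : E} (h : IsLocalMax f x) (hf : ContDiffAt ℝ 2 f x) (w : E) :
    fderiv ℝ (fderiv ℝ f) x w w ≤ 0 := by
  have hline : ∀ s : ℝ, HasDerivAt (fun s : ℝ => x + s • w) w s := fun s => by
    simpa using ((hasDerivAt_id s).smul_const w).const_add x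
  have hline0 : x + (0 : ℝ) • w = x := by simp
  have hcont : ContinuousAt (fun s : ℝ => x + s • w) 0 := (hline 0).continuousAt
  have hd : ∀ᶠ y in 𝓝 (x + (0 : ℝ) • w), DifferentiableAt ℝ f y := by
    rw [hline0]
    exact (hf.eventually (by simp)).mono fun y hy => hy.differentiableAt (by simp)
  have hderiv : deriv (fun s : ℝ => f (x + s • w)) =ᶠ[𝓝 0] fun s => fderiv ℝ f (x + s • w) w := by
    filter_upwards [hcont.preimage_mem_nhds hd] with s hs
    exact (hs.hasFDerivAt.comp_hasDerivAt s (hline s)).deriv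
  have hdd : DifferentiableAt ℝ (fderiv ℝ f) x :=
    (hf.fderiv_right (m := 1) (by norm_num)).differentiableAt one_ne_zero
  have hsecond : HasDerivAt (fun s : ℝ => fderiv ℝ f (x + s • w) w)
      (fderiv ℝ (fderiv ℝ f) x w w) 0 :=
    (ContinuousLinearMap.apply ℝ ℝ w).hasFDerivAt.comp_hasDerivAt 0
      (hdd.hasFDerivAt.comp_hasDerivAt_of_eq 0 (hline 0) hline0.symm)
  rw [← hsecond.deriv, ← hderiv.deriv_eq]
  exact (IsLocalMax.comp_continuous (hline0.symm ▸ h) hcont).deriv_deriv_nonpos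
    (hf.continuousAt.comp_of_eq hcont hline0)

theorem ContinuousOn.dist_le_mul_rpow_closure {X Y : Type*} [PseudoMetricSpace X]
    [PseudoMetricSpace Y] {f : X → Y} {s : Set X} (hf : ContinuousOn f (closure s)) {C α : ℝ}
    (hα : 0 ≤ α) (h : ∀ x ∈ s, ∀ y ∈ s, dist (f x) (f y) ≤ C * dist x y ^ α)
    {x y : X} (hx : x ∈ closure s) (hy : y ∈ closure s) :
    dist (f x) (f y) ≤ C * dist x y ^ α := by
  have hfx : ∀ z ∈ closure s, ContinuousWithinAt f s z := fun z hz => (hf z hz).mono subset_closure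
  refine ContinuousWithinAt.closure_le (β := X × X) (s := s ×ˢ s) (x := (x, y))
    (f := fun p => dist (f p.1) (f p.2)) (g := fun p => C * dist p.1 p.2 ^ α)
    (by rw [closure_prod_eq]; exact ⟨hx, hy⟩) ?_ ?_ fun p hp => h _ hp.1 _ hp.2
  · exact ((hfx x hx).comp (continuousWithinAt_fst (s := s ×ˢ s)) fun p hp => hp.1).dist
      ((hfx y hy).comp (continuousWithinAt_snd (s := s ×ˢ s)) fun p hp => hp.2)
  · exact (continuous_const.mul
      ((Real.continuous_rpow_const hα).comp continuous_dist)).continuousWithinAt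

section InnerProductSpace

variable {E : Type*} [NormedAddCommGroup E] [InnerProductSpace ℝ E]

theorem hasFDerivAt_bilinear_sub_sub (B : E →L[ℝ] E →L[ℝ] ℝ) (a y : E) :
    HasFDerivAt (fun z => B (z - a) (z - a)) (B (y - a) + B.flip (y - a)) y := by
  have h := hasFDerivAt_sub_const (𝕜 := ℝ) (x := y) a
  refine (B.hasFDerivAt_of_bilinear h h).congr_fderiv ?_
  ext w
  simp

theorem closure_setOf_lt_inner {e : E} (he : e ≠ 0) (c : ℝ) :
    closure {x : E | c < ⟪x, e⟫} = {x | c ≤ ⟪x, e⟫} := by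
  have hne : innerSL ℝ e ≠ 0 := fun h => he (by simpa using congrArg (· e) h)
  have h := ((innerSL ℝ e).isOpenMap_of_ne_zero hne).preimage_closure_eq_closure_preimage
    (innerSL ℝ e).continuous (Set.Ioi c)
  simp only [Set.preimage, Set.mem_Ioi, innerSL_apply_apply, closure_Ioi, Set.mem_Ici] at h
  simpa only [real_inner_comm e] using h.symm

theorem abs_sub_le_mul_rpow_of_holder_halfSpace {e : E} (he : ‖e‖ = 1) {c d C α : ℝ}
    (hα : 0 ≤ α) {v : E → ℝ} (hcont : ContinuousOn v (closure {x | c < ⟪x, e⟫}))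
    (hbdry : ∀ x, ⟪x, e⟫ = c → v x = d)
    (hHol : ∀ x ∈ {x | c < ⟪x, e⟫}, ∀ y ∈ {x | c < ⟪x, e⟫}, |v x - v y| ≤ C * ‖x - y‖ ^ α)
    {x : E} (hx : c < ⟪x, e⟫) : |v x - d| ≤ C * (⟪x, e⟫ - c) ^ α := by
  set p := x - (⟪x, e⟫ - c) • e
  have hp : ⟪p, e⟫ = c := by simp [p, inner_sub_left, real_inner_smul_left, he]
  have hxp : ‖x - p‖ = ⟪x, e⟫ - c := by
    simp [p, norm_smul, he, abs_of_pos (sub_pos.2 hx)]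
  have hpcl : p ∈ closure {x | c < ⟪x, e⟫} := by
    rw [closure_setOf_lt_inner (by rintro rfl; simp at he)]
    exact hp.ge
  have := hcont.dist_le_mul_rpow_closure hα (by simpa [Real.dist_eq, dist_eq_norm] using hHol)
    (subset_closure hx) hpcl
  rwa [Real.dist_eq, dist_eq_norm, hxp, hbdry p hp] at this

noncomputable def slabBarrier (e x₀ : E) (c T ε η : ℝ) (x : E) : ℝ :=
  ε * (⟪x, e⟫ - c) + η * (‖x - x₀‖ ^ 2 + Module.finrank ℝ E * (T ^ 2 - (⟪x, e⟫ - c) ^ 2))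

theorem contDiff_slabBarrier (e x₀ : E) (c T ε η : ℝ) :
    ContDiff ℝ 2 (slabBarrier e x₀ c T ε η) := by
  have ht : ContDiff ℝ 2 fun x : E => ⟪x, e⟫ - c :=
    (contDiff_id.inner ℝ contDiff_const).sub contDiff_const
  exact (contDiff_const.mul ht).add (contDiff_const.mul
    (((contDiff_norm_sq ℝ).comp (contDiff_id.sub contDiff_const)).add
      (contDiff_const.mul (contDiff_const.sub (ht.pow 2)))))

theorem add_le_slabBarrier {e x₀ z : E} {c T ε η : ℝ} (hη : 0 ≤ η)
    (h₁ : c ≤ ⟪z, e⟫) (h₂ : ⟪z, e⟫ ≤ c + T) :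
    ε * (⟪z, e⟫ - c) + η * ‖z - x₀‖ ^ 2 ≤ slabBarrier e x₀ c T ε η z := by
  have : 0 ≤ T ^ 2 - (⟪z, e⟫ - c) ^ 2 := by nlinarith
  unfold slabBarrier
  gcongr
  exact le_add_of_nonneg_right (mul_nonneg (Nat.cast_nonneg _) this)

theorem frontier_slab_inter_ball_subset (e x₀ : E) (c T R : ℝ) :
    frontier ({x | c < ⟪x, e⟫} ∩ {x | ⟪x, e⟫ < c + T} ∩ ball x₀ R) ⊆
      {z | c ≤ ⟪z, e⟫ ∧ ⟪z, e⟫ ≤ c + T ∧ (⟪z, e⟫ = c ∨ ⟪z, e⟫ = c + T ∨ R ≤ ‖z - x₀‖)} := by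
  have hi : Continuous fun x : E => ⟪x, e⟫ := continuous_id.inner continuous_const
  have hΩ : IsOpen ({x | c < ⟪x, e⟫} ∩ {x | ⟪x, e⟫ < c + T} ∩ ball x₀ R) :=
    ((isOpen_lt continuous_const hi).inter (isOpen_lt hi continuous_const)).inter isOpen_ball
  rw [hΩ.frontier_eq]
  rintro z ⟨hcl, hnot⟩
  have h₁ : c ≤ ⟪z, e⟫ := closure_lt_subset_le continuous_const hi
    (closure_mono (Set.inter_subset_left.trans Set.inter_subset_left) hcl)
  have h₂ : ⟪z, e⟫ ≤ c + T := closure_lt_subset_le hi continuous_const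
    (closure_mono (Set.inter_subset_left.trans Set.inter_subset_right) hcl)
  refine ⟨h₁, h₂, ?_⟩
  by_contra! h
  exact hnot ⟨⟨h₁.lt_of_ne' h.1, h₂.lt_of_ne h.2.1⟩, mem_ball_iff_norm.2 h.2.2⟩

variable [FiniteDimensional ℝ E]

theorem laplacian_eq_sum_fderiv_fderiv {ι : Type*} [Fintype ι] (b : OrthonormalBasis ι ℝ E)
    (f : E → ℝ) (x : E) : Δ f x = ∑ i, fderiv ℝ (fderiv ℝ f) x (b i) (b i) := by
  simp [laplacian_eq_iteratedFDeriv_orthonormalBasis f b, iteratedFDeriv_two_apply]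

theorem laplacian_bilinear_sub_sub {ι : Type*} [Fintype ι] (b : OrthonormalBasis ι ℝ E)
    (B : E →L[ℝ] E →L[ℝ] ℝ) (a x : E) :
    Δ (fun z => B (z - a) (z - a)) x = 2 * ∑ i, B (b i) (b i) := by
  have hD : fderiv ℝ (fun z => B (z - a) (z - a)) = fun y => B (y - a) + B.flip (y - a) :=
    funext fun y => (hasFDerivAt_bilinear_sub_sub B a y).fderiv
  have hDD : HasFDerivAt (fun y => B (y - a) + B.flip (y - a)) (B + B.flip) x := by
    have h := hasFDerivAt_sub_const (𝕜 := ℝ) (x := x) a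
    exact (B.hasFDerivAt.comp x h).add (B.flip.hasFDerivAt.comp x h) |>.congr_fderiv (by ext; simp)
  rw [laplacian_eq_sum_fderiv_fderiv b, hD, hDD.fderiv, Finset.mul_sum]
  simp [two_mul]

theorem laplacian_norm_sub_sq (a x : E) :
    Δ (fun z => ‖z - a‖ ^ 2) x = 2 * Module.finrank ℝ E := by
  have h := laplacian_bilinear_sub_sub (stdOrthonormalBasis ℝ E) (innerSL ℝ) a x
  have hB : ∀ y z : E, innerSL ℝ y z = ⟪y, z⟫ := fun _ _ => rfl
  simp only [hB, real_inner_self_eq_norm_sq, OrthonormalBasis.norm_eq_one] at h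
  simpa using h

theorem laplacian_inner_sub_sq (a u x : E) :
    Δ (fun z => ⟪z - a, u⟫ ^ 2) x = 2 * ‖u‖ ^ 2 := by
  have h := laplacian_bilinear_sub_sub (stdOrthonormalBasis ℝ E)
    ((innerSL ℝ u).smulRight (innerSL ℝ u)) a x
  have hB : ∀ y z : E, (innerSL ℝ u).smulRight (innerSL ℝ u) y z = ⟪u, y⟫ * ⟪u, z⟫ :=
    fun _ _ => rfl
  simp only [hB] at h
  have hf : (fun z => ⟪z - a, u⟫ ^ 2) = fun z => ⟪u, z - a⟫ * ⟪u, z - a⟫ := by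
    funext z; rw [real_inner_comm, sq]
  rw [hf, h]
  simp only [← sq, OrthonormalBasis.sum_sq_inner_left]

theorem laplacian_affine (l : E →L[ℝ] ℝ) (k : ℝ) : Δ (fun z => l z + k) = 0 := by
  have hD : fderiv ℝ (fun z => l z + k) = fun _ => l :=
    funext fun y => (l.hasFDerivAt.add_const k).fderiv
  ext x
  simp [laplacian_eq_sum_fderiv_fderiv (stdOrthonormalBasis ℝ E), hD]

theorem laplacian_slabBarrier {e : E} (he : ‖e‖ = 1) (x₀ : E) (c T ε η : ℝ) :
    Δ (slabBarrier e x₀ c T ε η) = 0 := by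
  set n : ℝ := (Module.finrank ℝ E : ℝ)
  set ℓ : E → ℝ := fun x => (ε • innerSL ℝ e) x + -(ε * c)
  set q₁ : E → ℝ := fun x => ‖x - x₀‖ ^ 2
  set q₂ : E → ℝ := fun x => ⟪x - c • e, e⟫ ^ 2
  have ht : ∀ x, ⟪x - c • e, e⟫ = ⟪x, e⟫ - c := fun x => by
    rw [inner_sub_left, real_inner_smul_left, real_inner_self_eq_norm_sq, he, one_pow, mul_one]
  have hℓ' : ∀ x, ℓ x = ε * (⟪x, e⟫ - c) := fun x => by
    simp only [ℓ, FunLike.coe_smul, Pi.smul_apply, innerSL_apply_apply, smul_eq_mul,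
      real_inner_comm e]
    ring
  have hsplit : slabBarrier e x₀ c T ε η = ℓ + η • (q₁ + n • ((fun _ => T ^ 2) - q₂)) := by
    ext x
    simp only [slabBarrier, Pi.add_apply, Pi.smul_apply, Pi.sub_apply, smul_eq_mul, hℓ', q₁, q₂,
      ht, n]
  have hℓ : ContDiff ℝ 2 ℓ := (ε • innerSL ℝ e).contDiff.add contDiff_const
  have h₁ : ContDiff ℝ 2 q₁ := (contDiff_norm_sq ℝ).comp (contDiff_id.sub contDiff_const)
  have h₂ : ContDiff ℝ 2 q₂ := ((contDiff_id.sub contDiff_const).inner ℝ contDiff_const).pow 2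
  have h₃ : ContDiff ℝ 2 ((fun _ : E => T ^ 2) - q₂) := contDiff_const.sub h₂
  have h₄ : ContDiff ℝ 2 (q₁ + n • ((fun _ : E => T ^ 2) - q₂)) := h₁.add (h₃.const_smul n)
  ext x
  rw [hsplit, hℓ.contDiffAt.laplacian_add (f₂ := η • (q₁ + n • ((fun _ => T ^ 2) - q₂)))
    (h₄.const_smul η).contDiffAt, laplacian_affine, laplacian_smul η h₄.contDiffAt,
    h₁.contDiffAt.laplacian_add (f₂ := n • ((fun _ => T ^ 2) - q₂)) (h₃.const_smul n).contDiffAt,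
    laplacian_smul n h₃.contDiffAt, contDiffAt_const.laplacian_sub h₂.contDiffAt,
    laplacian_norm_sub_sq, laplacian_inner_sub_sq, laplacian_const, he]
  simp only [Pi.zero_apply, smul_eq_mul, n]
  ring

theorem IsLocalMax.laplacian_nonpos {f : E → ℝ} {x : E} (h : IsLocalMax f x)
    (hf : ContDiffAt ℝ 2 f x) : Δ f x ≤ 0 := by
  rw [laplacian_eq_sum_fderiv_fderiv (stdOrthonormalBasis ℝ E)]
  exact Finset.sum_nonpos fun i _ => h.fderiv_fderiv_self_nonpos hf _

theorem le_of_forall_frontier_le_of_laplacian_pos {Ω : Set E} (hΩ : IsOpen Ω)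
    (hb : Bornology.IsBounded Ω) {f : E → ℝ} (hc : ContinuousOn f (closure Ω))
    (hf : ContDiffOn ℝ 2 f Ω) (hΔ : ∀ x ∈ Ω, 0 < Δ f x) {B : ℝ}
    (hB : ∀ x ∈ frontier Ω, f x ≤ B) {x : E} (hx : x ∈ Ω) : f x ≤ B := by
  obtain ⟨z, hz, hmax⟩ := hb.isCompact_closure.exists_isMaxOn ⟨x, subset_closure hx⟩ hc
  have hzΩ : z ∉ Ω := fun hzΩ =>
    ((hmax.isLocalMax (mem_of_superset (hΩ.mem_nhds hzΩ) subset_closure)).laplacian_nonpos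
      (hf.contDiffAt (hΩ.mem_nhds hzΩ))).not_gt (hΔ z hzΩ)
  exact (hmax (subset_closure hx)).trans (hB z (hΩ.frontier_eq ▸ ⟨hz, hzΩ⟩))

theorem le_of_forall_frontier_le_of_laplacian_nonneg [Nontrivial E] {Ω : Set E} (hΩ : IsOpen Ω)
    (hb : Bornology.IsBounded Ω) {f : E → ℝ} (hc : ContinuousOn f (closure Ω))
    (hf : ContDiffOn ℝ 2 f Ω) (hΔ : ∀ x ∈ Ω, 0 ≤ Δ f x) {B : ℝ}
    (hB : ∀ x ∈ frontier Ω, f x ≤ B) {x : E} (hx : x ∈ Ω) : f x ≤ B := by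
  obtain ⟨R, hR⟩ := hb.subset_closedBall (0 : E)
  have hR' : ∀ y ∈ closure Ω, ‖y‖ ^ 2 ≤ R ^ 2 := fun y hy => by
    have := mem_closedBall_zero_iff.1 (isClosed_closedBall.closure_subset_iff.2 hR hy)
    gcongr
  set q : E → ℝ := fun y => ‖y‖ ^ 2
  have hq : ContDiff ℝ 2 q := contDiff_norm_sq ℝ
  have hΔq : ∀ y, Δ q y = 2 * Module.finrank ℝ E := fun y => by
    simpa using laplacian_norm_sub_sq (0 : E) y
  suffices ∀ σ > 0, f x - B ≤ σ * R ^ 2 by linarith [nonpos_of_forall_pos_le_mul this]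
  intro σ hσ
  have hpos : ∀ y ∈ Ω, 0 < Δ (f + σ • q) y := fun y hy => by
    rw [(hf.contDiffAt (hΩ.mem_nhds hy)).laplacian_add (f₂ := σ • q) (hq.contDiffAt.const_smul σ),
      laplacian_smul σ hq.contDiffAt, hΔq, smul_eq_mul]
    have hn : (0 : ℝ) < Module.finrank ℝ E := by exact_mod_cast Module.finrank_pos
    linarith [hΔ y hy, mul_pos hσ (mul_pos two_pos hn)]
  have := le_of_forall_frontier_le_of_laplacian_pos hΩ hb (B := B + σ * R ^ 2)
    (hc.add (hq.continuous.continuousOn.const_smul σ)) (hf.add (hq.contDiffOn.const_smul σ)) hpos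
    (fun y hy => by
      have := mul_le_mul_of_nonneg_left (hR' y (frontier_subset_closure hy)) hσ.le
      simp only [Pi.add_apply, Pi.smul_apply, smul_eq_mul, q]
      linarith [hB y hy])
    hx
  simp only [Pi.add_apply, Pi.smul_apply, smul_eq_mul, q] at this
  nlinarith [sq_nonneg ‖x‖]

theorem le_add_mul_height_of_bddAbove_slab {e : E} (he : ‖e‖ = 1) {c d ε T : ℝ} (hε : 0 ≤ ε)
    {v : E → ℝ} (hcont : ContinuousOn v (closure {x | c < ⟪x, e⟫}))
    (hsm : ContDiffOn ℝ 2 v {x | c < ⟪x, e⟫})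
    (hΔ : ∀ x ∈ {x | c < ⟪x, e⟫}, 0 ≤ Δ v x)
    (hbdry : ∀ x, ⟪x, e⟫ = c → v x ≤ d)
    (hbdd : BddAbove (v '' {x | c < ⟪x, e⟫ ∧ ⟪x, e⟫ ≤ c + T}))
    (htop : ∀ x, ⟪x, e⟫ = c + T → v x ≤ d + ε * T)
    {x₀ : E} (hx₀ : c < ⟪x₀, e⟫) (hx₀T : ⟪x₀, e⟫ < c + T) :
    v x₀ ≤ d + ε * (⟪x₀, e⟫ - c) := by
  have : Nontrivial E := ⟨⟨e, 0, by rintro rfl; simp at he⟩⟩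
  have hi : Continuous fun x : E => ⟪x, e⟫ := continuous_id.inner continuous_const
  have hH : IsOpen {x : E | c < ⟪x, e⟫} := isOpen_lt continuous_const hi
  obtain ⟨M, hM⟩ := hbdd
  set K := max (M - d) 0
  have hK : ∀ x, c ≤ ⟪x, e⟫ → ⟪x, e⟫ ≤ c + T → v x - d ≤ K := fun x h₁ h₂ => by
    rcases h₁.eq_or_lt with h | h
    · linarith [hbdry x h.symm, le_max_right (M - d) 0]
    · linarith [hM ⟨x, ⟨h, h₂⟩, rfl⟩, le_max_left (M - d) 0]
  suffices ∀ η > 0, v x₀ - d - ε * (⟪x₀, e⟫ - c) ≤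
      η * (Module.finrank ℝ E * (T ^ 2 - (⟪x₀, e⟫ - c) ^ 2)) by
    linarith [nonpos_of_forall_pos_le_mul this]
  intro η hη
  obtain ⟨R, hR, hRK⟩ : ∃ R > 0, K ≤ η * R ^ 2 := by
    refine ⟨√(K / η + 1), by positivity, ?_⟩
    rw [Real.sq_sqrt (by positivity), mul_add, mul_div_cancel₀ _ hη.ne']
    linarith
  set Ω := {x | c < ⟪x, e⟫} ∩ {x | ⟪x, e⟫ < c + T} ∩ ball x₀ R
  have hΩH : Ω ⊆ {x | c < ⟪x, e⟫} := Set.inter_subset_left.trans Set.inter_subset_left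
  set b := slabBarrier e x₀ c T ε η
  have hb := contDiff_slabBarrier e x₀ c T ε η
  have hfront : ∀ z ∈ frontier Ω, (v - b) z ≤ d := fun z hz => by
    obtain ⟨h₁, h₂, hcase⟩ := frontier_slab_inter_ball_subset e x₀ c T R hz
    have hzb := add_le_slabBarrier (x₀ := x₀) (ε := ε) hη.le h₁ h₂
    have hnorm : 0 ≤ η * ‖z - x₀‖ ^ 2 := by positivity
    simp only [Pi.sub_apply]
    rcases hcase with h | h | h
    · linarith [hbdry z h, show ε * (⟪z, e⟫ - c) = 0 by rw [h, sub_self, mul_zero]]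
    · linarith [htop z h, show ε * (⟪z, e⟫ - c) = ε * T by rw [h, add_sub_cancel_left]]
    · have hR' : η * R ^ 2 ≤ η * ‖z - x₀‖ ^ 2 := by gcongr
      linarith [hK z h₁ h₂, mul_nonneg hε (sub_nonneg.2 h₁)]
  have hx₀b := le_of_forall_frontier_le_of_laplacian_nonneg (Ω := Ω) (f := v - b)
    ((hH.inter (isOpen_lt hi continuous_const)).inter isOpen_ball)
    (isBounded_ball.subset Set.inter_subset_right)
    ((hcont.mono (closure_mono hΩH)).sub hb.continuous.continuousOn)
    ((hsm.mono hΩH).sub hb.contDiffOn)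
    (fun x hx => by
      rw [(hsm.contDiffAt (hH.mem_nhds (hΩH hx))).laplacian_sub hb.contDiffAt,
        laplacian_slabBarrier he, Pi.zero_apply, sub_zero]
      exact hΔ x (hΩH hx))
    hfront ⟨⟨hx₀, hx₀T⟩, mem_ball_self hR⟩
  simp only [Pi.sub_apply, b, slabBarrier, sub_self, norm_zero] at hx₀b
  linarith

theorem le_of_laplacian_nonneg_of_rpow_growth {e : E} (he : ‖e‖ = 1) {c d C α : ℝ} (hα₀ : 0 ≤ α)
    (hα₁ : α < 1) {v : E → ℝ} (hcont : ContinuousOn v (closure {x | c < ⟪x, e⟫}))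
    (hsm : ContDiffOn ℝ 2 v {x | c < ⟪x, e⟫})
    (hΔ : ∀ x ∈ {x | c < ⟪x, e⟫}, 0 ≤ Δ v x)
    (hbdry : ∀ x, ⟪x, e⟫ = c → v x ≤ d)
    (hgrowth : ∀ x, c < ⟪x, e⟫ → v x - d ≤ C * (⟪x, e⟫ - c) ^ α)
    {x₀ : E} (hx₀ : c < ⟪x₀, e⟫) : v x₀ ≤ d := by
  suffices ∀ ε > 0, v x₀ - d ≤ ε * (⟪x₀, e⟫ - c) by linarith [nonpos_of_forall_pos_le_mul this]
  intro ε hε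
  obtain ⟨T, hT, hCT⟩ := exists_gt_mul_rpow_le_mul hα₁ C hε (⟪x₀, e⟫ - c)
  have hbdd : BddAbove (v '' {x | c < ⟪x, e⟫ ∧ ⟪x, e⟫ ≤ c + T}) := by
    refine ⟨d + |C| * T ^ α, ?_⟩
    rintro _ ⟨x, ⟨h₁, h₂⟩, rfl⟩
    have ht : 0 ≤ ⟪x, e⟫ - c := by linarith
    have : C * (⟪x, e⟫ - c) ^ α ≤ |C| * T ^ α :=
      (mul_le_mul_of_nonneg_right (le_abs_self C) (Real.rpow_nonneg ht α)).trans
        (mul_le_mul_of_nonneg_left (Real.rpow_le_rpow ht (by linarith) hα₀) (abs_nonneg C))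
    linarith [hgrowth x h₁]
  have htop : ∀ x, ⟪x, e⟫ = c + T → v x ≤ d + ε * T := fun x hx => by
    have := hgrowth x (by linarith)
    rw [hx, add_sub_cancel_left] at this
    linarith
  have := le_add_mul_height_of_bddAbove_slab he hε.le hcont hsm hΔ hbdry hbdd htop hx₀ (by linarith)
  linarith

end InnerProductSpace

theorem lap_eq_laplacian {N : ℕ} {f : Euc N → ℝ} {x : Euc N} (hf : ContDiffAt ℝ 2 f x) :
    lap f x = Δ f x := by
  have hdd : DifferentiableAt ℝ (fderiv ℝ f) x :=
    (hf.fderiv_right (m := 1) (by norm_num)).differentiableAt one_ne_zero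
  rw [laplacian_eq_sum_fderiv_fderiv (EuclideanSpace.basisFun (Fin N) ℝ)]
  refine Finset.sum_congr rfl fun i _ => ?_
  rw [fderiv_clm_apply hdd (differentiableAt_const _)]
  simp

theorem stmt10_general (N : ℕ) (α : ℝ) (hα : α ∈ Set.Ioo (0 : ℝ) 1)
    (e : Euc N) (he : ‖e‖ = 1) (c : ℝ)
    (H : Set (Euc N)) (hHdef : H = {x : Euc N | c < ⟪x, e⟫})
    (v : Euc N → ℝ)
    (hcont : ContinuousOn v (closure H))
    (hsm : ContDiffOn ℝ 2 v H)
    (hharm : ∀ x ∈ H, lap v x = 0)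
    (hbdry : ∃ d : ℝ, ∀ x : Euc N, ⟪x, e⟫ = c → v x = d)
    (hHol : ∃ C : ℝ, ∀ x ∈ H, ∀ y ∈ H, |v x - v y| ≤ C * ‖x - y‖ ^ α) :
    ∀ x ∈ H, ∀ y ∈ H, v x = v y := by
  subst hHdef
  obtain ⟨d, hd⟩ := hbdry
  obtain ⟨C, hC⟩ := hHol
  have hH : IsOpen {x : Euc N | c < ⟪x, e⟫} :=
    isOpen_lt continuous_const (continuous_id.inner continuous_const)
  have hΔ : ∀ x ∈ {x : Euc N | c < ⟪x, e⟫}, Δ v x = 0 := fun x hx =>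
    (lap_eq_laplacian (hsm.contDiffAt (hH.mem_nhds hx))).symm.trans (hharm x hx)
  have hgrowth : ∀ x, c < ⟪x, e⟫ → |v x - d| ≤ C * (⟪x, e⟫ - c) ^ α := fun x hx =>
    abs_sub_le_mul_rpow_of_holder_halfSpace he hα.1.le hcont hd hC hx
  have hle : ∀ x, c < ⟪x, e⟫ → v x ≤ d := fun x hx =>
    le_of_laplacian_nonneg_of_rpow_growth (C := C) he hα.1.le hα.2 hcont hsm
      (fun y hy => (hΔ y hy).ge) (fun y hy => (hd y hy).le)
      (fun y hy => by linarith [le_abs_self (v y - d), hgrowth y hy]) hx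
  have hge : ∀ x, c < ⟪x, e⟫ → d ≤ v x := fun x hx => by
    have := le_of_laplacian_nonneg_of_rpow_growth (v := -v) (d := -d) (C := C) he hα.1.le hα.2
      hcont.neg hsm.neg
      (fun y hy => by rw [laplacian_neg, Pi.neg_apply, hΔ y hy, neg_zero])
      (fun y hy => by simp [hd y hy])
      (fun y hy => by simp only [Pi.neg_apply]; linarith [neg_abs_le (v y - d), hgrowth y hy]) hx
    simpa using this
  intro x hx y hy
  rw [le_antisymm (hle x hx) (hge x hx), le_antisymm (hle y hy) (hge y hy)]

/-- Liouville on a half-space: a function continuous on the closure of a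
half-space `H`, harmonic in `H`, constant on `∂H`, and globally `α`-Hölder
continuous on `H` for some `α ∈ (0,1)`, is constant on `H`. -/
theorem stmt10 (N : ℕ) (hN : 1 ≤ N) (α : ℝ) (hα : α ∈ Set.Ioo (0 : ℝ) 1)
    (e : Euc N) (he : ‖e‖ = 1) (c : ℝ)
    (H : Set (Euc N)) (hHdef : H = {x : Euc N | c < ⟪x, e⟫})
    (v : Euc N → ℝ)
    (hcont : ContinuousOn v (closure H))
    (hsm : ContDiffOn ℝ 2 v H)
    (hharm : ∀ x ∈ H, lap v x = 0)
    (hbdry : ∃ d : ℝ, ∀ x : Euc N, ⟪x, e⟫ = c → v x = d)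
    (hHol : ∃ C : ℝ, ∀ x ∈ H, ∀ y ∈ H, |v x - v y| ≤ C * ‖x - y‖ ^ α) :
    ∀ x ∈ H, ∀ y ∈ H, v x = v y :=
  stmt10_general N α hα e he c H hHdef v hcont hsm hharm hbdry hHol
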